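/- arXiv:2006.03456 — 2 statements merged into one kernel-verified Lean document; each statement's English description precedes it below -/
import Mathlib

section
/- Let T be an admissible C-tree of rank k ≥ 1 whose top two level readings satisfy ω_k(T) ⪯ ω_{k−1}(T) (i.e., their concatenation is a tableau word). Then the label of T at the inner vertex (k−1)1⁻ is zero: s((k−1)1⁻) = 0. -/
namespace TypeC

/-- Letters of `C_n` are encoded as indices `0, …, 2n-1` in increasing order:
index `x < n` is the unbarred value `x+1`, and index `x ≥ n` is the barred
letter `bar (2n - x)`.  `Nval n z w` is the number `N_z(w)` of letters `x` of
`w` with `x ≤ z` or `x ≥ z̄` (as values). -/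
def Nval (n z : ℕ) (w : List ℕ) : ℕ :=
  w.countP (fun x => decide (x + 1 ≤ z ∨ 2 * n - z ≤ x))

/-- A column: a strictly increasing word over `C_n`. -/
def IsColumn (n : ℕ) (w : List ℕ) : Prop :=
  List.Pairwise (· < ·) w ∧ ∀ x ∈ w, x < 2 * n

/-- An admissible column: nonempty and `N_z(w) ≤ z` for all `z = 1,…,n`. -/
def Admissible (n : ℕ) (w : List ℕ) : Prop :=
  IsColumn n w ∧ w ≠ [] ∧ ∀ z, 1 ≤ z → z ≤ n → Nval n z w ≤ z

/-- `v` is a (nonempty) strict factor of `w`. -/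
def StrictFactor (v w : List ℕ) : Prop :=
  v ≠ [] ∧ ∃ w₀ w₁, w = w₀ ++ v ++ w₁ ∧ ¬(w₀ = [] ∧ w₁ = [])

/-- An almost admissible column: not admissible, but all strict factors are. -/
def AlmostAdmissible (n : ℕ) (w : List ℕ) : Prop :=
  IsColumn n w ∧ ¬Admissible n w ∧ ∀ v, StrictFactor v w → Admissible n v

/-- Lecouvey's defining relations `R₁`, `R₂`, `R₃` of the type `C` plactic
monoid, on words of letter indices.  The bar involution on indices is
`x ↦ 2n - 1 - x`; the unbarred value `x` has index `x - 1` and `x̄` has index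
`2n - x`. -/
inductive PlStep (n : ℕ) : List ℕ → List ℕ → Prop
  | R1a (x y z : ℕ) : x ≤ y → y < z → z < 2 * n → z ≠ 2 * n - 1 - x →
      PlStep n [y, z, x] [y, x, z]
  | R1b (x y z : ℕ) : x < y → y ≤ z → z < 2 * n → z ≠ 2 * n - 1 - x →
      PlStep n [x, z, y] [z, x, y]
  | R2a (x y : ℕ) : 1 < x → x ≤ n → x - 1 ≤ y → y ≤ 2 * n - x →
      PlStep n [y, 2 * n - x + 1, x - 2] [y, x - 1, 2 * n - x]
  | R2b (x y : ℕ) : 1 < x → x ≤ n → x - 1 ≤ y → y ≤ 2 * n - x →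
      PlStep n [x - 1, 2 * n - x, y] [2 * n - x + 1, x - 2, y]
  | R3 (w : List ℕ) (z : ℕ) : AlmostAdmissible n w → 1 ≤ z → z ≤ n →
      (z - 1) ∈ w → (2 * n - z) ∈ w → Nval n z w = z + 1 →
      (∀ z', 1 ≤ z' → z' < z →
        ¬((z' - 1) ∈ w ∧ (2 * n - z') ∈ w ∧ Nval n z' w = z' + 1)) →
      PlStep n w ((w.erase (z - 1)).erase (2 * n - z))

/-- One plactic rewriting step in context. -/
def CtxStep (n : ℕ) (u v : List ℕ) : Prop :=
  ∃ a b x y, PlStep n x y ∧ u = a ++ x ++ b ∧ v = a ++ y ++ b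

/-- The plactic congruence of type `C`. -/
def PlacticEq (n : ℕ) : List ℕ → List ℕ → Prop :=
  Relation.EqvGen (CtxStep n)

/-- An `(a,b)`-configuration (Kashiwara–Nakashima) in the pair of columns
`(c, d)`. -/
def HasConfig (n : ℕ) (c d : List ℕ) : Prop :=
  ∃ a b p q r s, 1 ≤ a ∧ a ≤ b ∧ b ≤ n ∧ p ≤ q ∧ q < r ∧ r ≤ s ∧
    ((getElem? c p = some (a - 1) ∧ getElem? d q = some (b - 1) ∧
      getElem? d r = some (2 * n - b) ∧ getElem? d s = some (2 * n - a)) ∨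
     (getElem? c p = some (a - 1) ∧ getElem? c q = some (b - 1) ∧
      getElem? c r = some (2 * n - b) ∧ getElem? d s = some (2 * n - a))) ∧
    b - a ≤ (s - r) + (q - p)

/-- `Prec n c d` means `c ⪯ d` : `c` is at least as long as `d`, entrywise
`≤`, and there is no `(a,b)`-configuration.  With the convention `ε = []`,
this gives `c ⪯ ε` for every `c`. -/
def Prec (n : ℕ) (c d : List ℕ) : Prop :=
  d.length ≤ c.length ∧
  (∀ i xi yi, getElem? c (i : ℕ) = some xi → getElem? d i = some yi → xi ≤ yi) ∧
  ¬HasConfig n c d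

/-- A generator of `ACol`: the empty column `ε = []` or an admissible column. -/
def ColOrEps (n : ℕ) (c : List ℕ) : Prop := c = [] ∨ Admissible n c

/-- `(c₁ ← c₂) = d₁d₂` : the pair `(d₁, d₂)` is the `ε`-padded normal form of
the column insertion, characterised as the normal pair plactically congruent
to `c₁c₂`. -/
def InsPair (n : ℕ) (c₁ c₂ d₁ d₂ : List ℕ) : Prop :=
  ColOrEps n d₁ ∧ ColOrEps n d₂ ∧ Prec n d₂ d₁ ∧
  PlacticEq n (c₁ ++ c₂) (d₁ ++ d₂)

/-- A rewriting step of the `2`-polygraph `ACol` at position `j`. -/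
def StepAt (n : ℕ) (j : ℕ) (w w' : List (List ℕ)) : Prop :=
  ∃ (u v : List (List ℕ)) (c₁ c₂ d₁ d₂ : List ℕ),
    u.length = j ∧ w = u ++ c₁ :: c₂ :: v ∧ w' = u ++ d₁ :: d₂ :: v ∧
    ¬Prec n c₂ c₁ ∧ InsPair n c₁ c₂ d₁ d₂

/-- A rewriting step of `ACol` (at some position). -/
def AColStep (n : ℕ) (w w' : List (List ℕ)) : Prop := ∃ j, StepAt n j w w'

/-- The congruence generated by `ACol`, presenting `Pl^ℕ(C_n)`. -/
def AColEq (n : ℕ) : List (List ℕ) → List (List ℕ) → Prop :=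
  Relation.EqvGen (AColStep n)

/-- `RedTo n w s w'` : applying the reduction strategy `s` (a list of
positions) to `w` is valid and yields `w'`. -/
inductive RedTo (n : ℕ) : List (List ℕ) → List ℕ → List (List ℕ) → Prop
  | nil (w : List (List ℕ)) : RedTo n w [] w
  | cons {w w' w'' : List (List ℕ)} {j : ℕ} {s : List ℕ} :
      StepAt n j w w' → RedTo n w' s w'' → RedTo n w (j :: s) w''

/-- A tableau word: a word of admissible columns with `c_{i+1} ⪯ c_i`. -/
def TabWord (n : ℕ) (g : List (List ℕ)) : Prop :=
  (∀ c ∈ g, Admissible n c) ∧ List.Chain' (fun cl cr => Prec n cr cl) g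

/-- The label of the crystal edge going out of the letter with index `x`. -/
def labelOf (n x : ℕ) : ℕ := if x < n then x + 1 else 2 * n - 1 - x

def phiL (n i x : ℕ) : ℕ := if x + 1 < 2 * n ∧ labelOf n x = i then 1 else 0

def epsL (n i x : ℕ) : ℕ := if 0 < x ∧ labelOf n (x - 1) = i then 1 else 0

/-- `ε_i` of a word (Kashiwara). -/
def epsW (n i : ℕ) : List ℕ → ℕ
  | [] => 0
  | x :: u => epsL n i x + (epsW n i u - phiL n i x)

/-- `φ_i` of a word (Kashiwara). -/
def phiW (n i : ℕ) : List ℕ → ℕ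
  | [] => 0
  | x :: u => phiW n i u + (phiL n i x - epsW n i u)

/-- The Kashiwara lowering operator `f_i` on words of `C_n^*`. -/
def fW (n i : ℕ) : List ℕ → Option (List ℕ)
  | [] => none
  | x :: u =>
      if epsW n i u < phiL n i x then some ((x + 1) :: u)
      else (fW n i u).map (x :: ·)

/-- The Kashiwara raising operator `e_i` on words of `C_n^*`. -/
def eW (n i : ℕ) : List ℕ → Option (List ℕ)
  | [] => none
  | x :: u =>
      if epsW n i u ≤ phiL n i x then
        (if epsL n i x = 1 then some ((x - 1) :: u) else none)
      else (eW n i u).map (x :: ·)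

/-- `f_i` on words over `ACol(C_n)` (each letter a column, `ε = []`). -/
def fA (n i : ℕ) : List (List ℕ) → Option (List (List ℕ))
  | [] => none
  | c :: w =>
      if epsW n i w.flatten < phiW n i c then (fW n i c).map (· :: w)
      else (fA n i w).map (c :: ·)

/-- `e_i` on words over `ACol(C_n)`. -/
def eA (n i : ℕ) : List (List ℕ) → Option (List (List ℕ))
  | [] => none
  | c :: w =>
      if epsW n i w.flatten ≤ phiW n i c then (eW n i c).map (· :: w)
      else (eA n i w).map (c :: ·)

/-! C-trees.  A labeling of the `C`-tree is encoded by two functions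
`sOut i j = s(ij)` (outer vertices, `sOut i 0 = s(i)`) and
`sInn i j = s(ij⁻)` (inner vertices, `j ≥ 1`), for strands `i ≥ 1`. -/

def SO (sOut : ℕ → ℕ → ℕ) (i j : ℕ) : ℕ := ∑ l ∈ Finset.range (j + 1), sOut i l
def SI (sInn : ℕ → ℕ → ℕ) (i j : ℕ) : ℕ := ∑ l ∈ Finset.range (j + 1), sInn i l

/-- The valuation `q(ij)` at an outer vertex. -/
def qOut (sOut sInn : ℕ → ℕ → ℕ) (i j : ℕ) : ℕ := SO sOut i j - SI sInn i (j - 1)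

/-- The valuation `q(ij⁻)` at an inner vertex. -/
def qInn (sOut sInn : ℕ → ℕ → ℕ) (i j : ℕ) : ℕ := SO sOut i j - SI sInn i j

/-- Labels vanish outside the rank-`k` truncation (and on the fictitious
strand `0` and inner vertices `i0⁻`). -/
def TreeSupport (k : ℕ) (sOut sInn : ℕ → ℕ → ℕ) : Prop :=
  (∀ i j, i = 0 ∨ k < i + j → sOut i j = 0) ∧
  (∀ i j, i = 0 ∨ j = 0 ∨ k < i + j → sInn i j = 0)

/-- `n`-labeling condition: `0 ≤ q(v) ≤ n` at every vertex. -/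
def NLabeled (n : ℕ) (sOut sInn : ℕ → ℕ → ℕ) : Prop :=
  ∀ i j, SI sInn i j ≤ SO sOut i j ∧ qOut sOut sInn i j ≤ n

/-- Column conditions: `q(ij) ≤ q((i−1)(j+1)⁻)` and `q(ij) ≤ q((i−1)j⁻)`. -/
def ColumnCond (k : ℕ) (sOut sInn : ℕ → ℕ → ℕ) : Prop :=
  ∀ i j, 2 ≤ i → i + j ≤ k →
    qOut sOut sInn i j ≤ qInn sOut sInn (i - 1) (j + 1) ∧
    (1 ≤ j → qOut sOut sInn i j ≤ qInn sOut sInn (i - 1) j)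

/-- Admissibility conditions of a labeled `C`-tree. -/
def AdmissCond (k : ℕ) (sOut sInn : ℕ → ℕ → ℕ) : Prop :=
  ∀ t l, t ≤ k → l + 1 ≤ t →
    (∑ i ∈ Finset.range (l + 1), (sOut (t - i) i + sInn (t - i) i)) ≤
      qOut sOut sInn (t - l) l

/-- An admissible `n`-labeled `C`-tree of rank `k`. -/
def IsAdmTree (n k : ℕ) (sOut sInn : ℕ → ℕ → ℕ) : Prop :=
  TreeSupport k sOut sInn ∧ NLabeled n sOut sInn ∧
  ColumnCond k sOut sInn ∧ AdmissCond k sOut sInn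

/-- The block column `ρ(ij)` read off an outer vertex. -/
def rhoOut (sOut sInn : ℕ → ℕ → ℕ) (i j : ℕ) : List ℕ :=
  if j = 0 then List.range (sOut i 0)
  else List.range' (qInn sOut sInn i (j - 1)) (sOut i j)

/-- The block column `ρ(ij⁻)` read off an inner vertex. -/
def rhoInn (n : ℕ) (sOut sInn : ℕ → ℕ → ℕ) (i j : ℕ) : List ℕ :=
  List.range' (2 * n - qOut sOut sInn i j) (sInn i j)

/-- The reading `ω_t` of the `t`-th level. -/
def levelWord (n : ℕ) (sOut sInn : ℕ → ℕ → ℕ) (t : ℕ) : List ℕ :=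
  ((List.range t).map (fun l => rhoOut sOut sInn (t - l) l)).flatten ++
  ((List.range (t - 1)).map (fun m => rhoInn n sOut sInn (m + 1) (t - (m + 1)))).flatten

/-- The reading `ω(T) ∈ ACol(C_n)^*` of a labeled `C`-tree of rank `k`. -/
def omegaT (n k : ℕ) (sOut sInn : ℕ → ℕ → ℕ) : List (List ℕ) :=
  (List.range k).map (fun t => levelWord n sOut sInn (t + 1))

/-!
If `s((k−1)1⁻) > 0`, the letter of `ω_k` in position `d = s(k)` is at least
`d + s((k−1)1⁻)`: the admissibility conditions of level `k` bound every block after the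
root block from below. But admissibility also gives `d + s((k−1)1⁻) ≤ a = s(k−1)`, so the
letter of `ω_{k−1}` in position `d` is `d` itself, contradicting `ω_k ⪯ ω_{k−1}`.
-/

section LevelReading

variable (n : ℕ) (sOut sInn : ℕ → ℕ → ℕ)

theorem qInn_le_qOut (i l : ℕ) : qInn sOut sInn i l ≤ qOut sOut sInn i l :=
  Nat.sub_le_sub_left
    (Finset.sum_le_sum_of_subset (Finset.range_subset_range.2 (by omega))) _

theorem qInn_le_sOut_zero (i : ℕ) : qInn sOut sInn i 0 ≤ sOut i 0 := by
  simp [qInn, SO]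

theorem qOut_succ_le_qInn_add (i l : ℕ) :
    qOut sOut sInn i (l + 1) ≤ qInn sOut sInn i l + sOut i (l + 1) := by
  simp only [qOut, qInn, SO, Finset.sum_range_succ _ (l + 1), Nat.add_sub_cancel]
  omega

def levelTail (t : ℕ) : List ℕ :=
  ((List.range t).map fun l => rhoOut sOut sInn (t - l) (l + 1)).flatten ++
  ((List.range t).map fun m => rhoInn n sOut sInn (m + 1) (t - m)).flatten

theorem levelWord_succ (t : ℕ) :
    levelWord n sOut sInn (t + 1) = List.range (sOut (t + 1) 0) ++ levelTail n sOut sInn t := by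
  simp only [levelWord, levelTail, List.range_succ_eq_map, List.map_cons, List.map_map,
    List.flatten_cons, List.append_assoc, Function.comp_def, Nat.succ_eq_add_one,
    Nat.add_sub_add_right]
  rfl

theorem getElem?_levelWord_succ_of_lt {t i : ℕ} (hi : i < sOut (t + 1) 0) :
    (levelWord n sOut sInn (t + 1))[i]? = some i := by
  rw [levelWord_succ, List.getElem?_append_left (by simpa using hi), List.getElem?_range hi]

theorem getElem?_levelWord_succ_sOut (t : ℕ) :
    (levelWord n sOut sInn (t + 1))[sOut (t + 1) 0]? = (levelTail n sOut sInn t).head? := by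
  rw [levelWord_succ, List.getElem?_append_right (by simp)]
  simp [List.head?_eq_getElem?]

theorem mem_levelTail_succ (t : ℕ) (hpos : 0 < sInn (t + 1) 1) :
    2 * n - qOut sOut sInn (t + 1) 1 ∈ levelTail n sOut sInn (t + 1) := by
  refine List.mem_append_right _ (List.mem_flatten.2 ⟨rhoInn n sOut sInn (t + 1) 1, ?_, ?_⟩)
  · exact List.mem_map.2 ⟨t, List.mem_range.2 (by omega), by simp⟩
  · exact List.mem_range'_1.2 ⟨le_rfl, by omega⟩

theorem sOut_add_sInn_add_sOut_le_sum (t l : ℕ) :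
    sOut (t + 1) 0 + sInn t 1 + sOut (t - l) (l + 1) ≤
      ∑ i ∈ Finset.range (l + 1 + 1), (sOut (t + 1 - i) i + sInn (t + 1 - i) i) := by
  rw [Finset.sum_add_distrib]
  have hOut := Finset.add_le_sum (f := fun i => sOut (t + 1 - i) i) (fun _ _ => Nat.zero_le _)
    (Finset.mem_range.2 (show 0 < l + 1 + 1 by omega))
    (Finset.mem_range.2 (show l + 1 < l + 1 + 1 by omega)) (by omega)
  have hInn := Finset.single_le_sum (f := fun i => sInn (t + 1 - i) i) (fun _ _ => Nat.zero_le _)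
    (Finset.mem_range.2 (show 1 < l + 1 + 1 by omega))
  simp only [Nat.sub_zero, Nat.add_sub_cancel, Nat.add_sub_add_right] at hOut hInn
  omega

theorem AdmissCond.sOut_add_sInn_le_qInn {k : ℕ} (hadm : AdmissCond k sOut sInn) {t l : ℕ}
    (ht : t + 1 ≤ k) (hl : l < t) :
    sOut (t + 1) 0 + sInn t 1 ≤ qInn sOut sInn (t - l) l := by
  have hsum := hadm (t + 1) (l + 1) ht (by omega)
  rw [Nat.add_sub_add_right] at hsum
  have := sOut_add_sInn_add_sOut_le_sum sOut sInn t l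
  have := qOut_succ_le_qInn_add sOut sInn (t - l) l
  omega

theorem sOut_add_sInn_le_of_mem_levelTail {k : ℕ} (hlab : NLabeled n sOut sInn)
    (hadm : AdmissCond k sOut sInn) {t x : ℕ} (ht : t + 1 ≤ k) (htpos : 0 < t)
    (hx : x ∈ levelTail n sOut sInn t) : sOut (t + 1) 0 + sInn t 1 ≤ x := by
  rcases List.mem_append.1 hx with hx | hx
  · obtain ⟨_, hblock, hx⟩ := List.mem_flatten.1 hx
    obtain ⟨l, hl, rfl⟩ := List.mem_map.1 hblock
    have hl := List.mem_range.1 hl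
    simp only [rhoOut, Nat.add_one_ne_zero, if_false, Nat.add_sub_cancel] at hx
    exact (hadm.sOut_add_sInn_le_qInn sOut sInn ht hl).trans (List.mem_range'_1.1 hx).1
  · obtain ⟨_, hblock, hx⟩ := List.mem_flatten.1 hx
    obtain ⟨m, -, rfl⟩ := List.mem_map.1 hblock
    have hletter := (List.mem_range'_1.1 hx).1
    have hq := (hlab (m + 1) (t - m)).2
    have hroot := (hadm.sOut_add_sInn_le_qInn sOut sInn ht htpos).trans
      ((qInn_le_qOut sOut sInn _ _).trans (hlab (t - 0) 0).2)
    omega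

end LevelReading

theorem stmt16_general (n k : ℕ) (sOut sInn : ℕ → ℕ → ℕ)
    (h : IsAdmTree n k sOut sInn)
    (hprec : Prec n (levelWord n sOut sInn k) (levelWord n sOut sInn (k - 1))) :
    sInn (k - 1) 1 = 0 := by
  obtain ⟨hsupp, hlab, -, hadm⟩ := h
  obtain _ | _ | t := k
  · exact hsupp.2 _ _ (Or.inl rfl)
  · exact hsupp.2 _ _ (Or.inl rfl)
  show sInn (t + 1) 1 = 0
  by_contra hne
  obtain ⟨y, ys, htail⟩ := List.exists_cons_of_ne_nil
    (List.ne_nil_of_mem (mem_levelTail_succ n sOut sInn t (Nat.pos_of_ne_zero hne)))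
  have hy_large : sOut (t + 1 + 1) 0 + sInn (t + 1) 1 ≤ y :=
    sOut_add_sInn_le_of_mem_levelTail n sOut sInn hlab hadm le_rfl t.succ_pos
      (htail ▸ List.mem_cons_self)
  have hroot : sOut (t + 1 + 1) 0 + sInn (t + 1) 1 ≤ sOut (t + 1) 0 :=
    (hadm.sOut_add_sInn_le_qInn sOut sInn le_rfl t.succ_pos).trans
      (qInn_le_sOut_zero sOut sInn _)
  have hy_le := hprec.2.1 _ y _
    (by rw [getElem?_levelWord_succ_sOut, htail]; rfl)
    (getElem?_levelWord_succ_of_lt n sOut sInn (show sOut (t + 1 + 1) 0 < sOut (t + 1) 0 by omega))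
  omega

/-- If the top two level readings of an admissible `C`-tree of rank `k ≥ 1`
satisfy `ω_k(T) ⪯ ω_{k−1}(T)` (their concatenation is a tableau word), then
the label at the inner vertex `(k−1)1⁻` vanishes: `s((k−1)1⁻) = 0`. -/
theorem stmt16 (n k : ℕ) (hk : 1 ≤ k) (sOut sInn : ℕ → ℕ → ℕ)
    (h : IsAdmTree n k sOut sInn)
    (hprec : Prec n (levelWord n sOut sInn k) (levelWord n sOut sInn (k - 1))) :
    sInn (k - 1) 1 = 0 :=
  stmt16_general n k sOut sInn h hprec

end TypeC
end

section
/- In the rewriting system ACol for Pl^ℕ(C₃) (n = 3), the word w = (12)(1)(2 2̄) — i.e., t = 12, u = 1, v = 2 2̄ as admissible columns — has leftmost reduction strategy of length exactly 4 and rightmost reduction strategy of length exactly 3; hence the bound (4,3) on shapes of generating 3-cells is attained. -/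
namespace TypeC

/-! Each of the six steps is a column insertion `(c₁ ← c₂)` applied to a pair with `c₂ ⋠ c₁`,
certified by a short derivation in Lecouvey's relations: `1 2 1 ≡ 1 1 2` is an instance of `R₁`,
`1 2 2̄ ≡ 1` of `R₃`, and `1 2 2 2̄ ≡ 2 1` passes through `1 2 1̄ 1` (by `R₂`, then `R₃` on the
almost admissible column `1 2 1̄`).  When `c₁ c₂` is itself an admissible column the insertion
is `(ε)(c₁ c₂)`.  The final word `(ε)(1)(12)` is irreducible since its consecutive columns
are already ordered by `⪯`. -/

section Columns

variable {n : ℕ}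

instance : DecidablePred (IsColumn n) := fun _ => inferInstanceAs (Decidable (_ ∧ _))

theorem admissible_iff_forall_lt {w : List ℕ} :
    Admissible n w ↔ IsColumn n w ∧ w ≠ [] ∧ ∀ z < n, Nval n (z + 1) w ≤ z + 1 := by
  refine and_congr_right' (and_congr_right' ⟨fun h z hz => h _ (by omega) (by omega), ?_⟩)
  intro h z h1 h2
  obtain ⟨k, rfl⟩ : ∃ k, z = k + 1 := ⟨z - 1, by omega⟩
  exact h k (by omega)

instance : DecidablePred (Admissible n) := fun _ =>
  decidable_of_iff _ admissible_iff_forall_lt.symm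

theorem almostAdmissible_of_forall_tails_inits {w : List ℕ} (hw : IsColumn n w)
    (hna : ¬Admissible n w)
    (h : ∀ t ∈ w.tails, ∀ v ∈ t.inits, v ≠ [] → v ≠ w → Admissible n v) :
    AlmostAdmissible n w := by
  refine ⟨hw, hna, fun v ⟨hv, w₀, w₁, hvw, hne⟩ => h (v ++ w₁) ?_ v ?_ hv ?_⟩
  · exact (List.mem_tails _ _).2 ⟨w₀, by simp [hvw]⟩
  · exact (List.mem_inits _ _).2 (List.prefix_append _ _)
  · rintro rfl
    have hlen := congrArg List.length hvw
    simp only [List.length_append] at hlen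
    exact hne ⟨List.length_eq_zero_iff.1 (by omega), List.length_eq_zero_iff.1 (by omega)⟩

end Columns

section Prec

variable {n : ℕ}

theorem not_hasConfig_of_forall_lt {c d : List ℕ} (hd : ∀ x ∈ d, x < n) :
    ¬HasConfig n c d := by
  rintro ⟨a, b, p, q, r, s, -, hab, hbn, -, -, -, hcfg, -⟩
  have hbar : 2 * n - a ∉ d := fun hmem => by have := hd _ hmem; omega
  rcases hcfg with ⟨-, -, -, hs⟩ | ⟨-, -, -, hs⟩ <;> exact hbar (List.mem_of_getElem? hs)

theorem prec_nil (c : List ℕ) : Prec n c [] :=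
  ⟨by simp, by simp, not_hasConfig_of_forall_lt (by simp)⟩

theorem prec_cons_singleton {x y : ℕ} (c : List ℕ) (hxy : x ≤ y) (hy : y < n) :
    Prec n (x :: c) [y] := by
  refine ⟨by simp, ?_, not_hasConfig_of_forall_lt (by simpa using hy)⟩
  rintro (_ | i) xi yi h₁ h₂
  · simp only [List.getElem?_cons_zero, Option.some.injEq] at h₁ h₂
    omega
  · simp at h₂

theorem not_prec_of_length_lt {c d : List ℕ} (h : c.length < d.length) : ¬Prec n c d :=
  fun hp => absurd hp.1 (by omega)

theorem not_prec_cons_cons_of_lt {x y : ℕ} {c d : List ℕ} (h : y < x) :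
    ¬Prec n (x :: c) (y :: d) :=
  fun hp => absurd (hp.2.1 0 x y rfl rfl) (by omega)

end Prec

section Rewriting

variable {n : ℕ}

theorem PlStep.placticEq_append {x y : List ℕ} (a b : List ℕ) (h : PlStep n x y) :
    PlacticEq n (a ++ x ++ b) (a ++ y ++ b) :=
  Relation.EqvGen.rel _ _ ⟨a, b, x, y, h, rfl, rfl⟩

theorem PlStep.placticEq {x y : List ℕ} (h : PlStep n x y) : PlacticEq n x y := by
  simpa using h.placticEq_append [] []

theorem insPair_nil_of_admissible {c₁ c₂ : List ℕ} (h : Admissible n (c₁ ++ c₂)) :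
    InsPair n c₁ c₂ [] (c₁ ++ c₂) :=
  ⟨Or.inl rfl, Or.inr h, prec_nil _, Relation.EqvGen.refl _⟩

theorem stepAt_of_insPair {c₁ c₂ d₁ d₂ : List ℕ} (u v : List (List ℕ))
    (hnp : ¬Prec n c₂ c₁) (h : InsPair n c₁ c₂ d₁ d₂) :
    StepAt n u.length (u ++ c₁ :: c₂ :: v) (u ++ d₁ :: d₂ :: v) :=
  ⟨u, v, c₁, c₂, d₁, d₂, rfl, rfl, rfl, hnp, h⟩

theorem not_aColStep_of_isChain {w : List (List ℕ)}
    (hw : List.IsChain (fun cl cr => Prec n cr cl) w) (w' : List (List ℕ)) :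
    ¬AColStep n w w' := by
  rintro ⟨j, u, v, c₁, c₂, d₁, d₂, -, rfl, -, hnp, -⟩
  exact hnp (List.isChain_cons_cons.1 hw.right_of_append).1

end Rewriting

section Example

theorem insPair_12_1 : InsPair 3 [0, 1] [0] [0] [0, 1] :=
  ⟨Or.inr (by decide), Or.inr (by decide), prec_cons_singleton _ le_rfl (by norm_num),
    (PlStep.R1a 0 0 1 (by norm_num) (by norm_num) (by norm_num) (by norm_num)).placticEq⟩

theorem insPair_1_22bar : InsPair 3 [0] [1, 4] [] [0] := by
  refine ⟨Or.inl rfl, Or.inr (by decide), prec_nil _, PlStep.placticEq ?_⟩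
  refine PlStep.R3 [0, 1, 4] 2
    (almostAdmissible_of_forall_tails_inits (by decide) (by decide) (by decide))
    (by norm_num) (by norm_num) (by decide) (by decide) (by decide) fun z' h₁ h₂ => ?_
  interval_cases z'
  decide

theorem insPair_12_22bar : InsPair 3 [0, 1] [1, 4] [1] [0] := by
  refine ⟨Or.inr (by decide), Or.inr (by decide),
    prec_cons_singleton _ (by norm_num) (by norm_num), ?_⟩
  have hR₂ : PlacticEq 3 ([0] ++ [1, 5, 0] ++ []) ([0] ++ [1, 1, 4] ++ []) :=
    (PlStep.R2a 2 1 (by norm_num) (by norm_num) (by norm_num) (by norm_num)).placticEq_append _ _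
  have hR₃ : PlacticEq 3 ([] ++ [0, 1, 5] ++ [0]) ([] ++ [1] ++ [0]) := by
    refine (PlStep.R3 [0, 1, 5] 1
      (almostAdmissible_of_forall_tails_inits (by decide) (by decide) (by decide))
      (by norm_num) (by norm_num) (by decide) (by decide) (by decide)
      fun z' h₁ h₂ => by omega).placticEq_append _ _
  exact hR₂.symm.trans _ _ _ hR₃

end Example

/-- In `ACol` for `n = 3`, the word `(12)(1)(2 2̄)` (letter indices: `1 ↦ 0`,
`2 ↦ 1`, `2̄ ↦ 4`) has leftmost reduction strategy of length exactly `4`: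
`(12)(1)(22̄) ⟹ (1)(12)(22̄) ⟹ (1)(2)(1) ⟹ (ε)(12)(1) ⟹ (ε)(1)(12)`,
and rightmost reduction strategy of length exactly `3`:
`(12)(1)(22̄) ⟹ (12)(ε)(1) ⟹ (ε)(12)(1) ⟹ (ε)(1)(12)`;
hence the bound `(4,3)` on shapes of generating `3`-cells is attained. -/
theorem stmt18 :
    StepAt 3 0 [[0, 1], [0], [1, 4]] [[0], [0, 1], [1, 4]] ∧
    StepAt 3 1 [[0], [0, 1], [1, 4]] [[0], [1], [0]] ∧
    StepAt 3 0 [[0], [1], [0]] [[], [0, 1], [0]] ∧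
    StepAt 3 1 [[], [0, 1], [0]] [[], [0], [0, 1]] ∧
    StepAt 3 1 [[0, 1], [0], [1, 4]] [[0, 1], [], [0]] ∧
    StepAt 3 0 [[0, 1], [], [0]] [[], [0, 1], [0]] ∧
    (∀ w', ¬AColStep 3 [[], [0], [0, 1]] w') := by
  have h1_12 : ¬Prec 3 [0] [0, 1] := not_prec_of_length_lt (by decide)
  have h1_2 : Admissible 3 ([0] ++ [1]) := by decide
  have h12_ε : Admissible 3 ([0, 1] ++ []) := by decide
  refine ⟨stepAt_of_insPair [] [[1, 4]] h1_12 insPair_12_1,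
    stepAt_of_insPair [[0]] [] (not_prec_cons_cons_of_lt (by decide)) insPair_12_22bar,
    stepAt_of_insPair [] [[0]] (not_prec_cons_cons_of_lt (by decide))
      (insPair_nil_of_admissible h1_2),
    stepAt_of_insPair [[]] [] h1_12 insPair_12_1,
    stepAt_of_insPair [[0, 1]] [] (not_prec_cons_cons_of_lt (by decide)) insPair_1_22bar,
    stepAt_of_insPair [] [[0]] (not_prec_of_length_lt (by decide))
      (insPair_nil_of_admissible h12_ε),
    not_aColStep_of_isChain ?_⟩
  exact .cons_cons (prec_nil _)
    (.cons_cons (prec_cons_singleton _ (by norm_num) (by norm_num)) (.singleton _))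

end TypeC
end
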